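/- A sequence a : ℕ → ℂ belongs to the α-dual of cs^λ (i.e. ∑_k |a_k·x_k| < ∞ for every x ∈ cs^λ) if and only if sup over all finite sets N, K ⊆ ℕ of |∑_{n∈N} ∑_{k∈K} (b_{nk} − b_{n,k−1})| is finite, where b_{nk} = (−1)^{n−k}·λ_k/(λ_n − λ_{n−1})·a_n if n−1 ≤ k ≤ n and b_{nk} = 0 otherwise (with b_{n,−1} = 0). -/

import Mathlib

open Filter Topology

/-- `dl l k = λ_k - λ_{k-1}` with the convention `λ_{-1} = 0`. -/
noncomputable def dl (l : ℕ → ℝ) (k : ℕ) : ℝ := l k - (if k = 0 then 0 else l (k - 1))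

/-- `LamT l x n = Λ_n(x) = (1/λ_n) ∑_{k=0}^n (λ_k - λ_{k-1}) x_k`. -/
noncomputable def LamT (l : ℕ → ℝ) (x : ℕ → ℂ) (n : ℕ) : ℂ :=
  (1 / (l n : ℂ)) * ∑ k ∈ Finset.range (n + 1), ((dl l k : ℝ) : ℂ) * x k

/-- `cs^λ`: the partial sums `∑_{n=0}^m Λ_n(x)` converge. -/
def csLam (l : ℕ → ℝ) : Set (ℕ → ℂ) :=
  {x | ∃ L, Tendsto (fun m => ∑ n ∈ Finset.range (m + 1), LamT l x n) atTop (𝓝 L)}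

/-- `cs₀^λ`: the partial sums `∑_{n=0}^m Λ_n(x)` tend to `0`. -/
def cs0Lam (l : ℕ → ℝ) : Set (ℕ → ℂ) :=
  {x | Tendsto (fun m => ∑ n ∈ Finset.range (m + 1), LamT l x n) atTop (𝓝 0)}

/-- `bs^λ`: the partial sums `∑_{n=0}^m Λ_n(x)` are bounded. -/
def bsLam (l : ℕ → ℝ) : Set (ℕ → ℂ) :=
  {x | ∃ C, ∀ m, ‖∑ n ∈ Finset.range (m + 1), LamT l x n‖ ≤ C}

/-- The matrix `B^λ = (b_{nk})` associated with the sequence `a`: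
`b_{nk} = (-1)^{n-k} λ_k/(λ_n - λ_{n-1}) a_n` if `n-1 ≤ k ≤ n`, and `0` otherwise. -/
noncomputable def Bmat (l : ℕ → ℝ) (a : ℕ → ℂ) (n k : ℕ) : ℂ :=
  if n ≤ k + 1 ∧ k ≤ n then (-1 : ℂ) ^ (n - k) * (l k : ℂ) / ((dl l n : ℝ) : ℂ) * a n else 0

/-! Both conditions are equivalent to `∑ λ_n / (λ_n - λ_{n-1}) · |a_n| < ∞`.

The transform `x ↦ Λ(x)` is invertible, with `(λ_n - λ_{n-1}) x_n = λ_n Λ_n - λ_{n-1} Λ_{n-1}`.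
For `x ∈ cs^λ` the sequence `Λ(x)` tends to `0`, so it is bounded by some `M`, and hence
`|x_n| ≤ 2M λ_n / (λ_n - λ_{n-1})`.
Conversely, if the weighted series diverges, pick `δ ↓ 0` with `∑ λ_n/(λ_n - λ_{n-1}) |a_n| δ_n = ∞`
and let `x` be the sequence with `Λ_n(x) = (-1)^n δ_n`: it lies in `cs^λ` by the alternating series
test, while `|a_n x_n| ≥ λ_n/(λ_n - λ_{n-1}) |a_n| δ_n`.

The matrix `b` lives on the diagonal and the subdiagonal, so each row of differences has at most
three nonzero entries, each bounded by twice the weight; and when `N = K` consists of indices of a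
single parity the double sum only sees the diagonal entries, which dominate the weights. -/

open Finset

lemma tendsto_zero_of_tendsto_sum_range_succ {E : Type*} [NormedAddCommGroup E] {f : ℕ → E}
    {L : E} (h : Tendsto (fun m => ∑ n ∈ range (m + 1), f n) atTop (𝓝 L)) :
    Tendsto f atTop (𝓝 0) := by
  rw [← tendsto_add_atTop_iff_nat 1, ← sub_self L]
  refine ((tendsto_add_atTop_iff_nat 1).2 h |>.sub h).congr fun m => ?_
  rw [sum_range_succ _ (m + 1), add_sub_cancel_left]

lemma summable_abs_of_forall_abs_sum_le {ι : Type*} {w : ι → ℝ} {C : ℝ}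
    (h : ∀ J : Finset ι, |∑ j ∈ J, w j| ≤ C) : Summable fun j => |w j| := by
  refine summable_of_sum_le (c := 2 * C) (fun j => abs_nonneg _) fun J => ?_
  have hpos : ∑ j ∈ J with 0 ≤ w j, |w j| = ∑ j ∈ J with 0 ≤ w j, w j :=
    sum_congr rfl fun j hj => abs_of_nonneg (mem_filter.1 hj).2
  have hneg : ∑ j ∈ J with ¬0 ≤ w j, |w j| = -∑ j ∈ J with ¬0 ≤ w j, w j := by
    rw [← sum_neg_distrib]
    exact sum_congr rfl fun j hj => abs_of_neg (not_le.1 (mem_filter.1 hj).2)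
  rw [← sum_filter_add_sum_filter_not J (fun j => 0 ≤ w j), hpos, hneg]
  linarith [le_abs_self (∑ j ∈ J with 0 ≤ w j, w j), neg_abs_le (∑ j ∈ J with ¬0 ≤ w j, w j),
    h (J.filter fun j => 0 ≤ w j), h (J.filter fun j => ¬0 ≤ w j)]

lemma summable_norm_of_forall_norm_sum_le {ι : Type*} {w : ι → ℂ} {C : ℝ}
    (h : ∀ J : Finset ι, ‖∑ j ∈ J, w j‖ ≤ C) : Summable fun j => ‖w j‖ := by
  have hre : Summable fun j => |(w j).re| := summable_abs_of_forall_abs_sum_le fun J =>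
    (Complex.re_sum J w ▸ Complex.abs_re_le_norm _).trans (h J)
  have him : Summable fun j => |(w j).im| := summable_abs_of_forall_abs_sum_le fun J =>
    (Complex.im_sum J w ▸ Complex.abs_im_le_norm _).trans (h J)
  exact (hre.add him).of_nonneg_of_le (fun _ => norm_nonneg _)
    fun j => Complex.norm_le_abs_re_add_abs_im _

lemma sqrt_sub_sqrt_le_div {A B : ℝ} (hA : 0 < A) (hAB : A ≤ B) :
    √B - √A ≤ (B - A) / √B := by
  have hB : 0 < √B := Real.sqrt_pos.2 (hA.trans_le hAB)
  rw [le_div_iff₀ hB, sub_mul, Real.mul_self_sqrt (hA.le.trans hAB)]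
  nlinarith [Real.sqrt_le_sqrt hAB, Real.sqrt_nonneg A, Real.mul_self_sqrt hA.le]

-- Abel–Dini: with `S_m = 1 + ∑_{j<m} s_j`, the terms `s_j / √S_{j+1}` dominate the telescoping
-- differences `√S_{j+1} - √S_j`.
lemma exists_antitone_tendsto_zero_not_summable_mul {s : ℕ → ℝ} (hs : ∀ j, 0 ≤ s j)
    (hns : ¬Summable s) :
    ∃ δ : ℕ → ℝ, (∀ j, 0 ≤ δ j) ∧ Antitone δ ∧ Tendsto δ atTop (𝓝 0) ∧
      ¬Summable fun j => s j * δ j := by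
  set R : ℕ → ℝ := fun m => √(1 + ∑ j ∈ range m, s j)
  have hS : Tendsto (fun m => ∑ j ∈ range m, s j) atTop atTop :=
    (not_summable_iff_tendsto_nat_atTop_of_nonneg hs).1 hns
  have hR : Tendsto R atTop atTop :=
    Real.tendsto_sqrt_atTop.comp (tendsto_atTop_add_const_left _ 1 hS)
  have hSpos : ∀ m, 0 < 1 + ∑ j ∈ range m, s j := fun m =>
    add_pos_of_pos_of_nonneg one_pos (sum_nonneg fun j _ => hs j)
  have hRmono : Monotone R := fun m m' h => Real.sqrt_le_sqrt <| add_le_add_right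
    (sum_le_sum_of_subset_of_nonneg (range_subset_range.2 h) fun j _ _ => hs j) 1
  have hRpos : ∀ m, 0 < R m := fun m => Real.sqrt_pos.2 (hSpos m)
  refine ⟨fun j => (R (j + 1))⁻¹, fun j => (inv_pos.2 (hRpos _)).le,
    fun i j h => inv_anti₀ (hRpos _) (hRmono (by omega)),
    hR.comp (tendsto_add_atTop_nat 1) |>.inv_tendsto_atTop, fun hsum => ?_⟩
  have htele : ∀ m, R m - 1 ≤ ∑ j ∈ range m, s j * (R (j + 1))⁻¹ := by
    intro m
    induction m with
    | zero => simp [R]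
    | succ m ih =>
      have hstep := sqrt_sub_sqrt_le_div (hSpos m) (le_add_of_nonneg_right (hs m))
      rw [add_sub_cancel_left, div_eq_mul_inv, add_assoc, ← sum_range_succ] at hstep
      change R (m + 1) - R m ≤ s m * (R (m + 1))⁻¹ at hstep
      rw [sum_range_succ]
      linarith
  exact (not_summable_iff_tendsto_nat_atTop_of_nonneg fun j =>
      mul_nonneg (hs j) (inv_pos.2 (hRpos _)).le).2
    (tendsto_atTop_mono htele (tendsto_atTop_add_const_right _ (-1) hR)) hsum

lemma norm_sum_le_card_mul_of_support_subset {ι E : Type*} [SeminormedAddCommGroup E]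
    {f : ι → E} {T : Finset ι} (hT : ∀ i, f i ≠ 0 → i ∈ T) {c : ℝ} (hc : ∀ i, ‖f i‖ ≤ c)
    (K : Finset ι) : ‖∑ i ∈ K, f i‖ ≤ #T * c := by
  classical
  rcases isEmpty_or_nonempty ι with hι | ⟨⟨i₀⟩⟩
  · simp [Finset.eq_empty_of_isEmpty K, Finset.eq_empty_of_isEmpty T]
  rw [← sum_filter_of_ne (p := (· ∈ T)) fun i _ hi => hT i hi]
  calc ‖∑ i ∈ K with i ∈ T, f i‖ ≤ #(K.filter (· ∈ T)) • c :=
        (norm_sum_le _ _).trans (sum_le_card_nsmul _ _ _ fun i _ => hc i)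
    _ ≤ #T * c := by
      rw [nsmul_eq_mul]
      gcongr
      · exact (norm_nonneg _).trans (hc i₀)
      · exact fun i hi => (mem_filter.1 hi).2

lemma norm_sum_diag_le_of_tridiagonal {E : Type*} [SeminormedAddCommGroup E] {c : ℕ → ℕ → E}
    (hc : ∀ n k, k + 1 < n ∨ n + 1 < k → c n k = 0) {C : ℝ}
    (hC : ∀ N K : Finset ℕ, ‖∑ n ∈ N, ∑ k ∈ K, c n k‖ ≤ C) (S : Finset ℕ) :
    ‖∑ n ∈ S, c n n‖ ≤ 2 * C := by
  -- on indices of a single parity the double sum only sees the diagonal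
  have hparity : ∀ (q : ℕ → Prop) [DecidablePred q], (∀ n k, q n → q k → n % 2 = k % 2) →
      ‖∑ n ∈ S with q n, c n n‖ ≤ C := by
    intro q _ hq
    refine le_of_eq_of_le (congrArg norm (sum_congr rfl fun n hn => ?_)) (hC _ (S.filter q))
    refine (sum_eq_single_of_mem n hn fun k hk hkn => hc n k ?_).symm
    have := hq n k (mem_filter.1 hn).2 (mem_filter.1 hk).2
    omega
  rw [← sum_filter_add_sum_filter_not S (fun n => n % 2 = 0), two_mul]
  exact (norm_add_le _ _).trans (add_le_add (hparity _ fun n k hn hk => by omega)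
    (hparity _ fun n k hn hk => by omega))

variable {l : ℕ → ℝ}

lemma lam_pos (hmono : StrictMono l) (hpos : 0 < l 0) (n : ℕ) : 0 < l n :=
  hpos.trans_le (hmono.monotone n.zero_le)

lemma dl_pos (hmono : StrictMono l) (hpos : 0 < l 0) (n : ℕ) : 0 < dl l n := by
  unfold dl
  split_ifs with hn
  · simpa [hn] using hpos
  · exact sub_pos.2 (hmono (by omega))

noncomputable def LamTInv (l : ℕ → ℝ) (G : ℕ → ℂ) (n : ℕ) : ℂ :=
  ((l n : ℂ) * G n - if n = 0 then 0 else (l (n - 1) : ℂ) * G (n - 1)) / (dl l n : ℂ)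

lemma mul_LamT (hmono : StrictMono l) (hpos : 0 < l 0) (x : ℕ → ℂ) (n : ℕ) :
    (l n : ℂ) * LamT l x n = ∑ k ∈ range (n + 1), (dl l k : ℂ) * x k := by
  have : (l n : ℂ) ≠ 0 := Complex.ofReal_ne_zero.2 (lam_pos hmono hpos n).ne'
  rw [LamT, ← mul_assoc, mul_one_div_cancel this, one_mul]

lemma LamT_LamTInv (hmono : StrictMono l) (hpos : 0 < l 0) (G : ℕ → ℂ) :
    LamT l (LamTInv l G) = G := by
  have hsum : ∀ n, ∑ k ∈ range (n + 1), (dl l k : ℂ) * LamTInv l G k = l n * G n := by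
    have hdl : ∀ k, (dl l k : ℂ) ≠ 0 := fun k =>
      Complex.ofReal_ne_zero.2 (dl_pos hmono hpos k).ne'
    intro n
    induction n with
    | zero => simp [LamTInv, mul_div_cancel₀ _ (hdl 0)]
    | succ n ih =>
      rw [sum_range_succ, ih, LamTInv, mul_div_cancel₀ _ (hdl _), if_neg n.succ_ne_zero,
        Nat.add_sub_cancel, add_sub_cancel]
  funext n
  have : (l n : ℂ) ≠ 0 := Complex.ofReal_ne_zero.2 (lam_pos hmono hpos n).ne'
  rw [LamT, hsum, ← mul_assoc, one_div_mul_cancel this, one_mul]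

lemma LamTInv_LamT (hmono : StrictMono l) (hpos : 0 < l 0) (x : ℕ → ℂ) :
    LamTInv l (LamT l x) = x := by
  funext n
  have hdl : (dl l n : ℂ) ≠ 0 := Complex.ofReal_ne_zero.2 (dl_pos hmono hpos n).ne'
  rw [LamTInv, div_eq_iff hdl, mul_LamT hmono hpos]
  cases n with
  | zero => simp [mul_comm]
  | succ n => rw [if_neg n.succ_ne_zero, Nat.add_sub_cancel, mul_LamT hmono hpos, sum_range_succ,
      add_sub_cancel_left, mul_comm]

lemma norm_LamTInv_le (hmono : StrictMono l) (hpos : 0 < l 0) {G : ℕ → ℂ} {M : ℝ}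
    (hG : ∀ n, ‖G n‖ ≤ M) (n : ℕ) : ‖LamTInv l G n‖ ≤ 2 * M * (l n / dl l n) := by
  have hM : 0 ≤ M := (norm_nonneg _).trans (hG 0)
  have hprev : ‖if n = 0 then 0 else (l (n - 1) : ℂ) * G (n - 1)‖ ≤ l n * M := by
    split_ifs
    · simpa using mul_nonneg (lam_pos hmono hpos n).le hM
    · rw [norm_mul, Complex.norm_real, Real.norm_of_nonneg (lam_pos hmono hpos _).le]
      exact mul_le_mul (hmono.monotone (n.sub_le 1)) (hG _) (norm_nonneg _)
        (lam_pos hmono hpos n).le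
  have hcur : ‖(l n : ℂ) * G n‖ ≤ l n * M := by
    rw [norm_mul, Complex.norm_real, Real.norm_of_nonneg (lam_pos hmono hpos _).le]
    exact mul_le_mul_of_nonneg_left (hG n) (lam_pos hmono hpos n).le
  rw [LamTInv, norm_div, Complex.norm_real, Real.norm_of_nonneg (dl_pos hmono hpos n).le,
    div_le_iff₀ (dl_pos hmono hpos n), mul_assoc, div_mul_cancel₀ _ (dl_pos hmono hpos n).ne']
  linarith [norm_sub_le ((l n : ℂ) * G n) (if n = 0 then 0 else (l (n - 1) : ℂ) * G (n - 1))]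

lemma le_norm_LamTInv_alternating (hmono : StrictMono l) (hpos : 0 < l 0) {δ : ℕ → ℝ}
    (hδ : ∀ n, 0 ≤ δ n) (n : ℕ) :
    l n / dl l n * δ n ≤ ‖LamTInv l (fun n => (-1) ^ n * (δ n : ℂ)) n‖ := by
  set prev : ℝ := if n = 0 then 0 else l (n - 1) * δ (n - 1)
  have hprev : 0 ≤ prev := by
    unfold prev
    split_ifs
    exacts [le_rfl, mul_nonneg (lam_pos hmono hpos _).le (hδ _)]
  have heq : LamTInv l (fun n => (-1) ^ n * (δ n : ℂ)) n
      = (-1) ^ n * (((l n * δ n + prev) / dl l n : ℝ) : ℂ) := by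
    rcases n with _ | n
    · simp [LamTInv, prev]
    · simp only [LamTInv, prev, if_neg n.succ_ne_zero, Nat.add_sub_cancel, pow_succ]
      push_cast
      ring
  rw [heq, norm_mul, norm_pow, norm_neg, norm_one, one_pow, one_mul, Complex.norm_real,
    Real.norm_of_nonneg (div_nonneg (by nlinarith [lam_pos hmono hpos n, hδ n])
      (dl_pos hmono hpos n).le), div_mul_eq_mul_div]
  gcongr
  · exact (dl_pos hmono hpos n).le
  · linarith

lemma LamTInv_alternating_mem_csLam (hmono : StrictMono l) (hpos : 0 < l 0) {δ : ℕ → ℝ}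
    (hδ : Antitone δ) (hδ0 : Tendsto δ atTop (𝓝 0)) :
    LamTInv l (fun n => (-1) ^ n * (δ n : ℂ)) ∈ csLam l := by
  obtain ⟨L, hL⟩ := hδ.tendsto_alternating_series_of_tendsto_zero hδ0
  refine ⟨L, ?_⟩
  rw [LamT_LamTInv hmono hpos]
  convert (Complex.continuous_ofReal.tendsto L).comp (hL.comp (tendsto_add_atTop_nat 1)) with m
  simp

variable {a : ℕ → ℂ}

lemma div_dl_mul_norm_nonneg (hmono : StrictMono l) (hpos : 0 < l 0) (n : ℕ) :
    0 ≤ l n / dl l n * ‖a n‖ :=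
  mul_nonneg (div_nonneg (lam_pos hmono hpos n).le (dl_pos hmono hpos n).le) (norm_nonneg _)

lemma summable_weight_of_forall_summable_mul (hmono : StrictMono l) (hpos : 0 < l 0)
    (h : ∀ x ∈ csLam l, Summable fun k => ‖a k * x k‖) :
    Summable fun n => l n / dl l n * ‖a n‖ := by
  have ht := div_dl_mul_norm_nonneg (a := a) hmono hpos
  by_contra hns
  obtain ⟨δ, hδ, hδa, hδ0, hδns⟩ := exists_antitone_tendsto_zero_not_summable_mul ht hns
  refine hδns <| (h _ (LamTInv_alternating_mem_csLam hmono hpos hδa hδ0)).of_nonneg_of_le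
    (fun n => mul_nonneg (ht n) (hδ n)) fun n => ?_
  rw [norm_mul, mul_right_comm]
  exact mul_le_mul_of_nonneg_right (le_norm_LamTInv_alternating hmono hpos hδ n) (norm_nonneg _)
    |>.trans_eq (mul_comm _ _)

lemma summable_mul_of_summable_weight (hmono : StrictMono l) (hpos : 0 < l 0)
    (ha : Summable fun n => l n / dl l n * ‖a n‖) {x : ℕ → ℂ} (hx : x ∈ csLam l) :
    Summable fun k => ‖a k * x k‖ := by
  obtain ⟨L, hL⟩ := hx
  obtain ⟨M, hM⟩ := (tendsto_zero_of_tendsto_sum_range_succ hL).norm.bddAbove_range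
  refine (ha.mul_left (2 * M)).of_nonneg_of_le (fun _ => norm_nonneg _) fun n => ?_
  have hxn := norm_LamTInv_le hmono hpos (fun n => hM ⟨n, rfl⟩) n
  rw [LamTInv_LamT hmono hpos] at hxn
  rw [norm_mul, mul_comm]
  calc ‖x n‖ * ‖a n‖ ≤ 2 * M * (l n / dl l n) * ‖a n‖ := by gcongr
    _ = 2 * M * (l n / dl l n * ‖a n‖) := by ring

lemma forall_summable_mul_iff (hmono : StrictMono l) (hpos : 0 < l 0) :
    (∀ x ∈ csLam l, Summable fun k => ‖a k * x k‖) ↔ Summable fun n => l n / dl l n * ‖a n‖ :=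
  ⟨summable_weight_of_forall_summable_mul hmono hpos,
    fun ha _ => summable_mul_of_summable_weight hmono hpos ha⟩

noncomputable def Bdiff (l : ℕ → ℝ) (a : ℕ → ℂ) (n k : ℕ) : ℂ :=
  Bmat l a n k - if k = 0 then 0 else Bmat l a n (k - 1)

lemma Bdiff_eq_zero {n k : ℕ} (h : k + 1 < n ∨ n + 1 < k) : Bdiff l a n k = 0 := by
  unfold Bdiff Bmat
  rw [if_neg (by omega)]
  split_ifs <;> first | rfl | omega | simp

lemma norm_Bmat_le (hmono : StrictMono l) (hpos : 0 < l 0) (n k : ℕ) :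
    ‖Bmat l a n k‖ ≤ l n / dl l n * ‖a n‖ := by
  unfold Bmat
  split_ifs with h
  · rw [norm_mul, norm_div, norm_mul, norm_pow, norm_neg, norm_one, one_pow, one_mul,
      Complex.norm_real, Complex.norm_real, Real.norm_of_nonneg (lam_pos hmono hpos k).le,
      Real.norm_of_nonneg (dl_pos hmono hpos n).le]
    gcongr
    exacts [(dl_pos hmono hpos n).le, hmono.monotone h.2]
  · exact norm_zero (E := ℂ) ▸ div_dl_mul_norm_nonneg hmono hpos n

lemma norm_Bdiff_le (hmono : StrictMono l) (hpos : 0 < l 0) (n k : ℕ) :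
    ‖Bdiff l a n k‖ ≤ 2 * (l n / dl l n * ‖a n‖) := by
  have hprev : ‖if k = 0 then 0 else Bmat l a n (k - 1)‖ ≤ l n / dl l n * ‖a n‖ := by
    split_ifs
    · exact norm_zero (E := ℂ) ▸ div_dl_mul_norm_nonneg hmono hpos n
    · exact norm_Bmat_le hmono hpos n (k - 1)
  rw [two_mul]
  exact (norm_sub_le _ _).trans (add_le_add (norm_Bmat_le hmono hpos n k) hprev)

lemma le_norm_Bdiff_self (hmono : StrictMono l) (hpos : 0 < l 0) (n : ℕ) :
    l n / dl l n * ‖a n‖ ≤ ‖Bdiff l a n n‖ := by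
  set prev : ℝ := if n = 0 then 0 else l (n - 1)
  have hprev : 0 ≤ prev := by
    unfold prev
    split_ifs
    exacts [le_rfl, (lam_pos hmono hpos _).le]
  have heq : Bdiff l a n n = (((l n + prev) / dl l n : ℝ) : ℂ) * a n := by
    rcases n with _ | n
    · simp [Bdiff, Bmat, prev]
    · rw [Bdiff, Bmat, Bmat, if_pos (by omega), if_neg n.succ_ne_zero, Nat.add_sub_cancel,
        if_pos (by omega), Nat.sub_self, show n + 1 - n = 1 by omega]
      simp only [prev, if_neg n.succ_ne_zero, Nat.add_sub_cancel]
      push_cast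
      ring
  rw [heq, norm_mul, Complex.norm_real, Real.norm_of_nonneg
    (div_nonneg (by linarith [lam_pos hmono hpos n]) (dl_pos hmono hpos n).le)]
  gcongr
  · exact (dl_pos hmono hpos n).le
  · linarith

lemma norm_sum_sum_Bdiff_le (hmono : StrictMono l) (hpos : 0 < l 0)
    (ha : Summable fun n => l n / dl l n * ‖a n‖) (N K : Finset ℕ) :
    ‖∑ n ∈ N, ∑ k ∈ K, Bdiff l a n k‖ ≤ 6 * ∑' n, l n / dl l n * ‖a n‖ := by
  have hrow : ∀ n, ‖∑ k ∈ K, Bdiff l a n k‖ ≤ 6 * (l n / dl l n * ‖a n‖) := fun n =>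
    calc ‖∑ k ∈ K, Bdiff l a n k‖ ≤ #{n - 1, n, n + 1} * (2 * (l n / dl l n * ‖a n‖)) :=
          norm_sum_le_card_mul_of_support_subset (fun k hk => by
            have := mt Bdiff_eq_zero hk
            simp only [mem_insert, mem_singleton]
            omega) (norm_Bdiff_le hmono hpos n) K
      _ ≤ 3 * (2 * (l n / dl l n * ‖a n‖)) := by
          gcongr
          · exact mul_nonneg zero_le_two (div_dl_mul_norm_nonneg hmono hpos n)
          · exact_mod_cast card_le_three
      _ = 6 * (l n / dl l n * ‖a n‖) := by ring
  calc ‖∑ n ∈ N, ∑ k ∈ K, Bdiff l a n k‖ ≤ ∑ n ∈ N, 6 * (l n / dl l n * ‖a n‖) :=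
        norm_sum_le_of_le N fun n _ => hrow n
    _ ≤ 6 * ∑' n, l n / dl l n * ‖a n‖ := by
        rw [← mul_sum]
        gcongr
        exact ha.sum_le_tsum N fun n _ => div_dl_mul_norm_nonneg hmono hpos n

lemma summable_weight_of_norm_sum_sum_Bdiff_le (hmono : StrictMono l) (hpos : 0 < l 0) {C : ℝ}
    (hC : ∀ N K : Finset ℕ, ‖∑ n ∈ N, ∑ k ∈ K, Bdiff l a n k‖ ≤ C) :
    Summable fun n => l n / dl l n * ‖a n‖ :=
  (summable_norm_of_forall_norm_sum_le
    (norm_sum_diag_le_of_tridiagonal (fun _ _ => Bdiff_eq_zero) hC)).of_nonneg_of_le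
    (div_dl_mul_norm_nonneg hmono hpos)
    (le_norm_Bdiff_self hmono hpos)

theorem stmt12_general (l : ℕ → ℝ) (hmono : StrictMono l) (hpos : 0 < l 0)
    (a : ℕ → ℂ) :
    (∀ x ∈ csLam l, Summable fun k => ‖a k * x k‖) ↔
    (∃ C : ℝ, ∀ N K : Finset ℕ,
      ‖∑ n ∈ N, ∑ k ∈ K,
        (Bmat l a n k - (if k = 0 then 0 else Bmat l a n (k - 1)))‖ ≤ C) := by
  rw [forall_summable_mul_iff hmono hpos]
  exact ⟨fun ha => ⟨_, norm_sum_sum_Bdiff_le hmono hpos ha⟩,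
    fun ⟨_, hC⟩ => summable_weight_of_norm_sum_sum_Bdiff_le hmono hpos hC⟩

theorem stmt12 (l : ℕ → ℝ) (hmono : StrictMono l) (hpos : 0 < l 0)
    (hlim : Tendsto l atTop atTop) (a : ℕ → ℂ) :
    (∀ x ∈ csLam l, Summable fun k => ‖a k * x k‖) ↔
    (∃ C : ℝ, ∀ N K : Finset ℕ,
      ‖∑ n ∈ N, ∑ k ∈ K,
        (Bmat l a n k - (if k = 0 then 0 else Bmat l a n (k - 1)))‖ ≤ C) :=
  stmt12_general l hmono hpos a
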